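/- arXiv:1312.5478 — 5 statements merged into one kernel-verified Lean document; each statement's English description precedes it below -/
import Mathlib

section
/- Let Â := M⁻¹N and σ̂² := (⟨x, x⟩ − ∑_{l,l'} N_l (M⁻¹)_{l'l} N_{l'}) / n, and assume σ̂² > 0. Then (Â, σ̂²) is a global maximizer of the likelihood Λ over ℝ^L × (0, ∞): for all A ∈ ℝ^L and all σ² > 0, Λ(A, σ²) ≤ Λ(Â, σ̂²). -/
/-!
Write `G` for the matrix whose rows are the templates, so that `∑ l, A l * h l = A ᵥ* G`,
`N = G *ᵥ x` and `M = G * Gᵀ`. Then `Â = N ᵥ* M⁻¹` solves the normal equations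
`G *ᵥ (x - Â ᵥ* G) = 0`, and by Pythagoras the residual sum of squares is minimal at `Â`,
with value `⟪x, x⟫ - ⟪N, Â⟫ = n σ̂²`. The likelihood is decreasing in the residual sum of
squares, and for a fixed one `n s` it is maximal at variance `s`, because `log t ≤ t - 1`.
-/

open Real Matrix

section LeastSquares

variable {R ι m : Type*} [Fintype ι] [Fintype m]

section CommRing

variable [CommRing R] (G : Matrix ι m R) (x : m → R)

def residualSumSq (A : ι → R) : R := (x - A ᵥ* G) ⬝ᵥ (x - A ᵥ* G)

variable {G x}

theorem residualSumSq_eq_add_of_mulVec_eq_zero {A₀ : ι → R} (hA₀ : G *ᵥ (x - A₀ ᵥ* G) = 0)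
    (A : ι → R) :
    residualSumSq G x A = residualSumSq G x A₀ + ((A - A₀) ᵥ* G) ⬝ᵥ ((A - A₀) ᵥ* G) := by
  have hresid : x - A ᵥ* G = (x - A₀ ᵥ* G) - (A - A₀) ᵥ* G := by
    rw [sub_vecMul]; abel
  have horth : (x - A₀ ᵥ* G) ⬝ᵥ ((A - A₀) ᵥ* G) = 0 := by
    rw [dotProduct_comm, ← dotProduct_mulVec, hA₀, dotProduct_zero]
  rw [residualSumSq, residualSumSq, hresid]
  generalize x - A₀ ᵥ* G = r at horth ⊢
  generalize (A - A₀) ᵥ* G = w at horth ⊢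
  rw [sub_dotProduct, dotProduct_sub, dotProduct_sub, dotProduct_comm w r, horth]
  ring

theorem residualSumSq_eq_of_mulVec_eq_zero {A₀ : ι → R} (hA₀ : G *ᵥ (x - A₀ ᵥ* G) = 0) :
    residualSumSq G x A₀ = x ⬝ᵥ x - (G *ᵥ x) ⬝ᵥ A₀ := by
  have hfit : (A₀ ᵥ* G) ⬝ᵥ (x - A₀ ᵥ* G) = 0 := by
    rw [← dotProduct_mulVec, hA₀, dotProduct_zero]
  rw [residualSumSq, sub_dotProduct, hfit, sub_zero, dotProduct_sub, dotProduct_comm x (A₀ ᵥ* G),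
    ← dotProduct_mulVec, dotProduct_comm A₀]

theorem mulVec_sub_vecMul_inv_eq_zero [DecidableEq ι] (hG : IsUnit (G * Gᵀ).det) :
    G *ᵥ (x - ((G *ᵥ x) ᵥ* (G * Gᵀ)⁻¹) ᵥ* G) = 0 := by
  rw [mulVec_sub, mulVec_vecMul, ← vecMul_transpose (G * Gᵀ), transpose_mul, transpose_transpose,
    vecMul_vecMul, nonsing_inv_mul _ hG, vecMul_one, sub_self]

end CommRing

theorem residualSumSq_le_of_mulVec_eq_zero [CommRing R] [LinearOrder R] [IsStrictOrderedRing R]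
    {G : Matrix ι m R} {x : m → R} {A₀ : ι → R} (hA₀ : G *ᵥ (x - A₀ ᵥ* G) = 0) (A : ι → R) :
    residualSumSq G x A₀ ≤ residualSumSq G x A := by
  rw [residualSumSq_eq_add_of_mulVec_eq_zero hA₀ A]
  exact le_add_of_nonneg_right (Fintype.sum_nonneg fun _ => mul_self_nonneg _)

end LeastSquares

theorem rpow_neg_div_two_mul_exp_le {c m s v Q : ℝ} (hc : 0 < c) (hm : 0 ≤ m) (hs : 0 < s)
    (hv : 0 < v) (hQ : m * s ≤ Q) :
    (c * v) ^ (-m / 2) * exp (-Q / (2 * v)) ≤ (c * s) ^ (-m / 2) * exp (-(m * s) / (2 * s)) := by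
  rw [rpow_def_of_pos (by positivity), rpow_def_of_pos (by positivity), ← exp_add, ← exp_add,
    exp_le_exp, log_mul hc.ne' hv.ne', log_mul hc.ne' hs.ne']
  have hlog : log s - log v ≤ s / v - 1 := by
    rw [← log_div hs.ne' hv.ne']; exact log_le_sub_one_of_pos (by positivity)
  have hQv : m * s / (2 * v) ≤ Q / (2 * v) := by gcongr
  have : m / 2 * (log s - log v) ≤ m / 2 * (s / v - 1) := by gcongr
  field_simp at *
  nlinarith

/-- (Â, σ̂²) is a global maximizer of the Gaussian likelihood over
ℝ^L × (0, ∞). -/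
theorem gaussian_likelihood_joint_max
    (n L : ℕ) (x : Fin n → ℝ) (h : Fin L → Fin n → ℝ)
    (ip : (Fin n → ℝ) → (Fin n → ℝ) → ℝ)
    (hip : ip = fun u v => ∑ t, u t * v t)
    (N : Fin L → ℝ) (hN : N = fun l => ip x (h l))
    (M : Matrix (Fin L) (Fin L) ℝ) (hM : M = fun l l' => ip (h l) (h l'))
    (hMpd : M.PosDef)
    (Λ : (Fin L → ℝ) → ℝ → ℝ)
    (hΛ : Λ = fun A σ2 => (2 * Real.pi * σ2) ^ (-(n : ℝ) / 2) *
        Real.exp (-(ip (fun t => x t - ∑ l, A l * h l t)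
                       (fun t => x t - ∑ l, A l * h l t)) / (2 * σ2)))
    (Ahat : Fin L → ℝ) (hAhat : Ahat = fun l => ∑ l', M⁻¹ l' l * N l')
    (σhat2 : ℝ)
    (hσhat2 : σhat2 = (ip x x - ∑ l, ∑ l', N l * M⁻¹ l' l * N l') / n)
    (hσhat2pos : 0 < σhat2) :
    ∀ (A : Fin L → ℝ) (σ2 : ℝ), 0 < σ2 → Λ A σ2 ≤ Λ Ahat σhat2 := by
  intro A σ2 hσ2
  have hn : (n : ℝ) ≠ 0 := by
    rintro hn
    rw [hσhat2, hn, div_zero] at hσhat2pos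
    exact hσhat2pos.false
  subst hip
  set G : Matrix (Fin L) (Fin n) ℝ := of h
  have hNG : N = G *ᵥ x := by rw [hN]; ext l; exact dotProduct_comm _ _
  have hMG : M = G * Gᵀ := hM
  have hAhatN : Ahat = N ᵥ* M⁻¹ := by rw [hAhat]; ext l; exact dotProduct_comm _ _
  have hΛG (A : Fin L → ℝ) (v : ℝ) :
      Λ A v = (2 * π * v) ^ (-(n : ℝ) / 2) * exp (-residualSumSq G x A / (2 * v)) := by
    rw [hΛ]; rfl
  have hnormal : G *ᵥ (x - Ahat ᵥ* G) = 0 := by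
    rw [hAhatN, hNG, hMG]
    exact mulVec_sub_vecMul_inv_eq_zero ((isUnit_iff_isUnit_det _).mp (hMG ▸ hMpd.isUnit))
  have hmin : residualSumSq G x Ahat = n * σhat2 := by
    rw [residualSumSq_eq_of_mulVec_eq_zero hnormal, hσhat2, mul_div_cancel₀ _ hn, hAhatN, ← hNG]
    congr 1
    simp only [dotProduct, vecMul, Finset.mul_sum]
    exact Finset.sum_congr rfl fun l _ => Finset.sum_congr rfl fun l' _ => by ring
  rw [hΛG, hΛG, hmin]
  exact rpow_neg_div_two_mul_exp_le two_pi_pos n.cast_nonneg hσhat2pos hσ2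
    (hmin ▸ residualSumSq_le_of_mulVec_eq_zero hnormal A)
end

section
/- The likelihood ratio statistic for unknown noise variance equals −n·log(1 − 2F_σ/n): writing Â := M⁻¹N, σ̂² := (⟨x,x⟩ − NᵀM⁻¹N)/n, σ_r² := ⟨x,x⟩/n and F_σ := (1/2)·(NᵀM⁻¹N)/σ_r², and assuming σ̂² > 0 (hence also σ_r² > 0), one has 2·log( Λ(Â, σ̂²) / Λ(0, σ_r²) ) = −n·log(1 − 2F_σ/n). -/
/-!
The normal equations `Â M = N` make the residual sum of squares at the least-squares amplitudes
equal to `⟨x, x⟩ - NᵀM⁻¹N = n σ̂²`, while at `A = 0` it is `⟨x, x⟩ = n σ_r²`. When the variance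
is the residual sum of squares divided by `n`, the exponent of the likelihood is `-n/2` whatever
the data, so the likelihood ratio is `(σ̂² / σ_r²)^(-n/2)`, and `σ̂² / σ_r² = 1 - 2 F_σ / n`.
-/

open Real Matrix

section LeastSquares

variable {ι κ R : Type*} [Fintype ι] [Fintype κ] [DecidableEq κ] [CommRing R]

noncomputable def leastSquaresCoeff (G : Matrix κ ι R) (x : ι → R) : κ → R :=
  (G *ᵥ x) ᵥ* (G * Gᵀ)⁻¹

theorem vecMul_leastSquaresCoeff_dotProduct_self (G : Matrix κ ι R) (x : ι → R)
    (hG : IsUnit (G * Gᵀ).det) :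
    (leastSquaresCoeff G x ᵥ* G) ⬝ᵥ (leastSquaresCoeff G x ᵥ* G) =
      G *ᵥ x ⬝ᵥ leastSquaresCoeff G x := by
  have hnormal : leastSquaresCoeff G x ᵥ* (G * Gᵀ) = G *ᵥ x := by
    rw [leastSquaresCoeff, vecMul_vecMul, nonsing_inv_mul _ hG, vecMul_one]
  nth_rw 2 [← mulVec_transpose]
  rw [dotProduct_mulVec, vecMul_vecMul, hnormal]

theorem sub_vecMul_leastSquaresCoeff_dotProduct_self (G : Matrix κ ι R) (x : ι → R)
    (hG : IsUnit (G * Gᵀ).det) :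
    (x - leastSquaresCoeff G x ᵥ* G) ⬝ᵥ (x - leastSquaresCoeff G x ᵥ* G) =
      x ⬝ᵥ x - G *ᵥ x ⬝ᵥ leastSquaresCoeff G x := by
  have hcross : x ⬝ᵥ (leastSquaresCoeff G x ᵥ* G) = G *ᵥ x ⬝ᵥ leastSquaresCoeff G x := by
    rw [dotProduct_comm, ← dotProduct_mulVec, dotProduct_comm]
  simp only [sub_dotProduct, dotProduct_sub, dotProduct_comm _ x, hcross,
    vecMul_leastSquaresCoeff_dotProduct_self G x hG]
  ring

theorem mulVec_dotProduct_leastSquaresCoeff_nonneg [LinearOrder R] [IsStrictOrderedRing R]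
    (G : Matrix κ ι R) (x : ι → R) (hG : IsUnit (G * Gᵀ).det) :
    0 ≤ G *ᵥ x ⬝ᵥ leastSquaresCoeff G x := by
  rw [← vecMul_leastSquaresCoeff_dotProduct_self G x hG]
  exact Finset.sum_nonneg fun _ _ => mul_self_nonneg _

end LeastSquares

noncomputable def gaussianLikelihood (n rss σ2 : ℝ) : ℝ :=
  (2 * π * σ2) ^ (-n / 2) * exp (-rss / (2 * σ2))

theorem gaussianLikelihood_mul_self (n : ℝ) {σ2 : ℝ} (hσ2 : σ2 ≠ 0) :
    gaussianLikelihood n (n * σ2) σ2 = (2 * π * σ2) ^ (-n / 2) * exp (-n / 2) := by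
  rw [gaussianLikelihood]
  congr 2
  field_simp

theorem two_mul_log_gaussianLikelihood_div (n : ℝ) {σ2 τ2 : ℝ} (hσ2 : 0 < σ2) (hτ2 : 0 < τ2) :
    2 * log (gaussianLikelihood n (n * σ2) σ2 / gaussianLikelihood n (n * τ2) τ2) =
      -n * log (σ2 / τ2) := by
  rw [gaussianLikelihood_mul_self n hσ2.ne', gaussianLikelihood_mul_self n hτ2.ne',
    mul_div_mul_right _ _ (exp_pos _).ne', ← div_rpow (by positivity) (by positivity),
    mul_div_mul_left _ _ (by positivity), log_rpow (div_pos hσ2 hτ2)]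
  ring

theorem two_mul_log_gaussianLikelihood_sub_div {n : ℕ} {xx Q σhat2 σr2 Fσ : ℝ}
    (hQ : 0 ≤ Q) (hσhat2 : σhat2 = (xx - Q) / n) (hσhat2pos : 0 < σhat2)
    (hσr2 : σr2 = xx / n) (hFσ : Fσ = 1 / 2 * Q / σr2) :
    2 * log (gaussianLikelihood n (xx - Q) σhat2 / gaussianLikelihood n xx σr2) =
      -n * log (1 - 2 * Fσ / n) := by
  have hnpos : (0 : ℝ) < n := by
    rcases Nat.eq_zero_or_pos n with hn | hn
    · simp [hσhat2, hn] at hσhat2pos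
    · exact_mod_cast hn
  have hxx : xx = n * σr2 := by
    rw [hσr2]; field_simp
  have hQn : Q = n * (σr2 - σhat2) := by
    rw [hσhat2, hxx]; field_simp; ring
  have hσr2pos : 0 < σr2 := by
    rw [hQn] at hQ
    linarith [(mul_nonneg_iff_of_pos_left hnpos).mp hQ]
  have hratio : 1 - 2 * Fσ / n = σhat2 / σr2 := by
    rw [hFσ, hQn]
    field_simp
    ring
  rw [show xx - Q = n * σhat2 by rw [hQn, hxx]; ring, hxx,
    two_mul_log_gaussianLikelihood_div n hσhat2pos hσr2pos, hratio]

/-- The likelihood ratio statistic for unknown noise variance equals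
−n·log(1 − 2F_σ/n). -/
theorem likelihood_ratio_unknown_variance
    (n L : ℕ) (x : Fin n → ℝ) (h : Fin L → Fin n → ℝ)
    (ip : (Fin n → ℝ) → (Fin n → ℝ) → ℝ)
    (hip : ip = fun u v => ∑ t, u t * v t)
    (N : Fin L → ℝ) (hN : N = fun l => ip x (h l))
    (M : Matrix (Fin L) (Fin L) ℝ) (hM : M = fun l l' => ip (h l) (h l'))
    (hMpd : M.PosDef)
    (Λ : (Fin L → ℝ) → ℝ → ℝ)
    (hΛ : Λ = fun A σ2 => (2 * Real.pi * σ2) ^ (-(n : ℝ) / 2) *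
        Real.exp (-(ip (fun t => x t - ∑ l, A l * h l t)
                       (fun t => x t - ∑ l, A l * h l t)) / (2 * σ2)))
    (Ahat : Fin L → ℝ) (hAhat : Ahat = fun l => ∑ l', M⁻¹ l' l * N l')
    (σhat2 : ℝ)
    (hσhat2 : σhat2 = (ip x x - ∑ l, ∑ l', N l * M⁻¹ l' l * N l') / n)
    (hσhat2pos : 0 < σhat2)
    (σr2 : ℝ) (hσr2 : σr2 = ip x x / n)
    (Fσ : ℝ) (hFσ : Fσ = (1 / 2) * (∑ l, ∑ l', N l * M⁻¹ l' l * N l') / σr2) :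
    2 * Real.log (Λ Ahat σhat2 / Λ (fun _ => 0) σr2) =
      -(n : ℝ) * Real.log (1 - 2 * Fσ / n) := by
  have hip_dot : ip = dotProduct := hip
  subst hip_dot
  set G : Matrix (Fin L) (Fin n) ℝ := Matrix.of h
  have hNG : N = G *ᵥ x := by
    ext l; simp [G, hN, mulVec, dotProduct_comm]
  have hMG : M = G * Gᵀ := by
    ext; simp [G, hM, mul_apply, dotProduct]
  have hAhat_eq : Ahat = leastSquaresCoeff G x := by
    ext l; simp [hAhat, leastSquaresCoeff, ← hNG, ← hMG, vecMul, dotProduct, mul_comm]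
  have hQ : ∑ l, ∑ l', N l * M⁻¹ l' l * N l' = N ⬝ᵥ Ahat := by
    simp only [hAhat, dotProduct, Finset.mul_sum, mul_assoc]
  have hdet : IsUnit (G * Gᵀ).det := hMG ▸ isUnit_iff_ne_zero.mpr hMpd.det_pos.ne'
  have hΛrss : ∀ A σ2, Λ A σ2 = gaussianLikelihood n ((x - A ᵥ* G) ⬝ᵥ (x - A ᵥ* G)) σ2 := by
    intro A σ2; rw [hΛ]; rfl
  have hrss_hat : (x - Ahat ᵥ* G) ⬝ᵥ (x - Ahat ᵥ* G) = x ⬝ᵥ x - N ⬝ᵥ Ahat := by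
    rw [hAhat_eq, hNG, sub_vecMul_leastSquaresCoeff_dotProduct_self G x hdet]
  have hrss_zero : (x - (fun _ => 0) ᵥ* G) ⬝ᵥ (x - (fun _ => 0) ᵥ* G) = x ⬝ᵥ x := by
    rw [show (fun _ => (0 : ℝ)) = (0 : Fin L → ℝ) from rfl, zero_vecMul, sub_zero]
  have hfit : 0 ≤ N ⬝ᵥ Ahat := by
    rw [hAhat_eq, hNG]
    exact mulVec_dotProduct_leastSquaresCoeff_nonneg G x hdet
  rw [hQ] at hσhat2 hFσ
  rw [hΛrss, hΛrss, hrss_hat, hrss_zero]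
  exact two_mul_log_gaussianLikelihood_sub_div hfit hσhat2 hσhat2pos hσr2 hFσ
end

section
/- Amplitude invariants of the six-parameter model: with the eight amplitudes A₁₁, …, A₁₄, A₂₁, …, A₂₄ defined from (ι, ψ₀, G₁, G₂, H₁, H₂), one has E₁ := A₁₁² + A₁₂² + A₁₃² + A₁₄² = (A₁₊² + A₁ₓ²)(G₁² + G₂²), I₁ := A₁₁·A₁₄ − A₁₂·A₁₃ = A₁₊·A₁ₓ·(G₁² + G₂²), E₂ := A₂₁² + A₂₂² + A₂₃² + A₂₄² = (A₂₊² + A₂ₓ²)(H₁² + H₂²), and I₂ := A₂₁·A₂₄ − A₂₂·A₂₃ = A₂₊·A₂ₓ·(H₁² + H₂²). -/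
open Real

/-- Amplitude invariants of the six-parameter model. -/
theorem six_param_invariants
    (ι ψ0 G1 G2 H1 H2 : ℝ)
    (A1p A1x A2p A2x : ℝ)
    (hA1p : A1p = Real.sin ι * Real.cos ι / 2) (hA1x : A1x = Real.sin ι / 2)
    (hA2p : A2p = (1 + Real.cos ι ^ 2) / 2) (hA2x : A2x = Real.cos ι)
    (C1 C2 C3 C4 D1 D2 D3 D4 : ℝ)
    (hC1 : C1 = A1p * Real.cos (2 * ψ0)) (hC2 : C2 = A1x * Real.sin (2 * ψ0))
    (hC3 : C3 = A1p * Real.sin (2 * ψ0)) (hC4 : C4 = A1x * Real.cos (2 * ψ0))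
    (hD1 : D1 = A2p * Real.cos (2 * ψ0)) (hD2 : D2 = A2x * Real.sin (2 * ψ0))
    (hD3 : D3 = A2p * Real.sin (2 * ψ0)) (hD4 : D4 = A2x * Real.cos (2 * ψ0))
    (A11 A12 A13 A14 A21 A22 A23 A24 : ℝ)
    (hA11 : A11 = C1 * G1 - C2 * G2) (hA12 : A12 = C3 * G1 + C4 * G2)
    (hA13 : A13 = -C1 * G2 - C2 * G1) (hA14 : A14 = -C3 * G2 + C4 * G1)
    (hA21 : A21 = D1 * H1 - D2 * H2) (hA22 : A22 = D3 * H1 + D4 * H2)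
    (hA23 : A23 = -D1 * H2 - D2 * H1) (hA24 : A24 = -D3 * H2 + D4 * H1) :
    A11 ^ 2 + A12 ^ 2 + A13 ^ 2 + A14 ^ 2 = (A1p ^ 2 + A1x ^ 2) * (G1 ^ 2 + G2 ^ 2) ∧
    A11 * A14 - A12 * A13 = A1p * A1x * (G1 ^ 2 + G2 ^ 2) ∧
    A21 ^ 2 + A22 ^ 2 + A23 ^ 2 + A24 ^ 2 = (A2p ^ 2 + A2x ^ 2) * (H1 ^ 2 + H2 ^ 2) ∧
    A21 * A24 - A22 * A23 = A2p * A2x * (H1 ^ 2 + H2 ^ 2) := by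
  have h := Real.sin_sq_add_cos_sq (2 * ψ0)
  subst hA11 hA12 hA13 hA14 hA21 hA22 hA23 hA24 hC1 hC2 hC3 hC4 hD1 hD2 hD3 hD4
  refine ⟨by linear_combination ((A1p ^ 2 + A1x ^ 2) * (G1 ^ 2 + G2 ^ 2)) * h,
    by linear_combination (A1p * A1x * (G1 ^ 2 + G2 ^ 2)) * h,
    by linear_combination ((A2p ^ 2 + A2x ^ 2) * (H1 ^ 2 + H2 ^ 2)) * h,
    by linear_combination (A2p * A2x * (H1 ^ 2 + H2 ^ 2)) * h⟩
end

section
/- Inclination recovery in the six-parameter model: define E₂ := A₂₁² + A₂₂² + A₂₃² + A₂₄², I₂ := A₂₁·A₂₄ − A₂₂·A₂₃, h₂c := √((E₂ + √(E₂² − 4I₂²))/2) and h₂p := sign(I₂)·√((E₂ − √(E₂² − 4I₂²))/2). If H₁² + H₂² > 0, then h₂c + √(h₂c² − h₂p²) = √(H₁² + H₂²) and cos ι = h₂p / (h₂c + √(h₂c² − h₂p²)). -/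
open Real

/-- Inclination recovery in the six-parameter model. -/
theorem six_param_inclination_recovery
    (ι ψ0 G1 G2 H1 H2 : ℝ)
    (A1p A1x A2p A2x : ℝ)
    (hA1p : A1p = Real.sin ι * Real.cos ι / 2) (hA1x : A1x = Real.sin ι / 2)
    (hA2p : A2p = (1 + Real.cos ι ^ 2) / 2) (hA2x : A2x = Real.cos ι)
    (C1 C2 C3 C4 D1 D2 D3 D4 : ℝ)
    (hC1 : C1 = A1p * Real.cos (2 * ψ0)) (hC2 : C2 = A1x * Real.sin (2 * ψ0))
    (hC3 : C3 = A1p * Real.sin (2 * ψ0)) (hC4 : C4 = A1x * Real.cos (2 * ψ0))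
    (hD1 : D1 = A2p * Real.cos (2 * ψ0)) (hD2 : D2 = A2x * Real.sin (2 * ψ0))
    (hD3 : D3 = A2p * Real.sin (2 * ψ0)) (hD4 : D4 = A2x * Real.cos (2 * ψ0))
    (A11 A12 A13 A14 A21 A22 A23 A24 : ℝ)
    (hA11 : A11 = C1 * G1 - C2 * G2) (hA12 : A12 = C3 * G1 + C4 * G2)
    (hA13 : A13 = -C1 * G2 - C2 * G1) (hA14 : A14 = -C3 * G2 + C4 * G1)
    (hA21 : A21 = D1 * H1 - D2 * H2) (hA22 : A22 = D3 * H1 + D4 * H2)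
    (hA23 : A23 = -D1 * H2 - D2 * H1) (hA24 : A24 = -D3 * H2 + D4 * H1)
    (E2 I2 h2c h2p : ℝ)
    (hE2 : E2 = A21 ^ 2 + A22 ^ 2 + A23 ^ 2 + A24 ^ 2)
    (hI2 : I2 = A21 * A24 - A22 * A23)
    (hh2c : h2c = Real.sqrt ((E2 + Real.sqrt (E2 ^ 2 - 4 * I2 ^ 2)) / 2))
    (hh2p : h2p = Real.sign I2 * Real.sqrt ((E2 - Real.sqrt (E2 ^ 2 - 4 * I2 ^ 2)) / 2))
    (hH : 0 < H1 ^ 2 + H2 ^ 2) :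
    h2c + Real.sqrt (h2c ^ 2 - h2p ^ 2) = Real.sqrt (H1 ^ 2 + H2 ^ 2) ∧
    Real.cos ι = h2p / (h2c + Real.sqrt (h2c ^ 2 - h2p ^ 2)) := by
  have hSnn : (0:ℝ) ≤ H1 ^ 2 + H2 ^ 2 := le_of_lt hH
  have hsqrtS : 0 < Real.sqrt (H1 ^ 2 + H2 ^ 2) := Real.sqrt_pos.mpr hH
  have hpyth : Real.sin (2 * ψ0) ^ 2 + Real.cos (2 * ψ0) ^ 2 = 1 :=
    Real.sin_sq_add_cos_sq _
  set c := Real.cos ι with hc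
  have hc1 : c ^ 2 ≤ 1 := by rw [hc]; exact Real.cos_sq_le_one ι
  have hA2ppos : 0 < A2p := by rw [hA2p]; positivity
  have hE2' : E2 = (A2p ^ 2 + A2x ^ 2) * (H1 ^ 2 + H2 ^ 2) := by
    rw [hE2, hA21, hA22, hA23, hA24, hD1, hD2, hD3, hD4]
    linear_combination ((A2p ^ 2 + A2x ^ 2) * (H1 ^ 2 + H2 ^ 2)) * hpyth
  have hI2' : I2 = A2p * A2x * (H1 ^ 2 + H2 ^ 2) := by
    rw [hI2, hA21, hA22, hA23, hA24, hD1, hD2, hD3, hD4]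
    linear_combination (A2p * A2x * (H1 ^ 2 + H2 ^ 2)) * hpyth
  have hdnn : 0 ≤ (A2p ^ 2 - A2x ^ 2) * (H1 ^ 2 + H2 ^ 2) := by
    apply mul_nonneg _ hSnn
    rw [hA2p, hA2x]
    have h0 : ((1 + c ^ 2) / 2) ^ 2 - c ^ 2 = ((1 - c ^ 2) / 2) ^ 2 := by ring
    rw [h0]; positivity
  have hd : Real.sqrt (E2 ^ 2 - 4 * I2 ^ 2)
      = (A2p ^ 2 - A2x ^ 2) * (H1 ^ 2 + H2 ^ 2) := by
    have h1 : E2 ^ 2 - 4 * I2 ^ 2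
        = ((A2p ^ 2 - A2x ^ 2) * (H1 ^ 2 + H2 ^ 2)) ^ 2 := by
      rw [hE2', hI2']; ring
    rw [h1, Real.sqrt_sq hdnn]
  have hh2c' : h2c = A2p * Real.sqrt (H1 ^ 2 + H2 ^ 2) := by
    rw [hh2c, hd, hE2']
    have h1 : ((A2p ^ 2 + A2x ^ 2) * (H1 ^ 2 + H2 ^ 2)
        + (A2p ^ 2 - A2x ^ 2) * (H1 ^ 2 + H2 ^ 2)) / 2
        = A2p ^ 2 * (H1 ^ 2 + H2 ^ 2) := by ring
    rw [h1, Real.sqrt_mul (sq_nonneg A2p), Real.sqrt_sq hA2ppos.le]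
  have hEminus : (E2 - Real.sqrt (E2 ^ 2 - 4 * I2 ^ 2)) / 2
      = A2x ^ 2 * (H1 ^ 2 + H2 ^ 2) := by
    rw [hd, hE2']; ring
  have hh2p' : h2p = A2x * Real.sqrt (H1 ^ 2 + H2 ^ 2) := by
    rw [hh2p, hEminus, Real.sqrt_mul (sq_nonneg A2x), Real.sqrt_sq_eq_abs]
    rcases lt_trichotomy A2x 0 with h | h | h
    · have hIneg : I2 < 0 := by
        rw [hI2']
        exact mul_neg_of_neg_of_pos (mul_neg_of_pos_of_neg hA2ppos h) hH
      rw [Real.sign_of_neg hIneg, abs_of_neg h]; ring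
    · rw [hI2', h]; simp
    · have hIpos : 0 < I2 := by
        rw [hI2']
        exact mul_pos (mul_pos hA2ppos h) hH
      rw [Real.sign_of_pos hIpos, abs_of_pos h]; ring
  have hkey : Real.sqrt (h2c ^ 2 - h2p ^ 2)
      = (1 - c ^ 2) / 2 * Real.sqrt (H1 ^ 2 + H2 ^ 2) := by
    have h1 : h2c ^ 2 - h2p ^ 2
        = ((1 - c ^ 2) / 2 * Real.sqrt (H1 ^ 2 + H2 ^ 2)) ^ 2 := by
      rw [hh2c', hh2p', hA2p, hA2x]; ring
    rw [h1, Real.sqrt_sq (mul_nonneg (by linarith) hsqrtS.le)]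
  have hmain : h2c + Real.sqrt (h2c ^ 2 - h2p ^ 2)
      = Real.sqrt (H1 ^ 2 + H2 ^ 2) := by
    rw [hkey, hh2c', hA2p]; ring
  refine ⟨hmain, ?_⟩
  rw [hmain, hh2p', hA2x, mul_div_assoc, div_self hsqrtS.ne', mul_one]
end

section
/- Exact recovery of G₁, G₂, H₁, H₂ and ψ₀ in the six-parameter model: define b₁ := −A₁ₓ·A₁₁ + A₁₊·A₁₄, b₂ := A₁ₓ·A₁₂ + A₁₊·A₁₃, b₃ := A₁ₓ·A₁₄ − A₁₊·A₁₁, and c₁ := −A₂ₓ·A₂₁ + A₂₊·A₂₄, c₂ := A₂ₓ·A₂₂ + A₂₊·A₂₃, c₃ := A₂ₓ·A₂₄ − A₂₊·A₂₁. Then b₂ = (sin⁴ι/4)·cos 2ψ₀·G₂, b₃ = (sin⁴ι/4)·cos 2ψ₀·G₁, c₁ = −(sin⁴ι/4)·sin 2ψ₀·H₂, c₂ = −(sin⁴ι/4)·cos 2ψ₀·H₂, c₃ = −(sin⁴ι/4)·cos 2ψ₀·H₁. Consequently, if sin ι ≠ 0 and cos 2ψ₀ ≠ 0, then G₁ = 4b₃/(sin⁴ι·cos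 2ψ₀), G₂ = 4b₂/(sin⁴ι·cos 2ψ₀), H₁ = −4c₃/(sin⁴ι·cos 2ψ₀), H₂ = −4c₂/(sin⁴ι·cos 2ψ₀); and if additionally H₂ ≠ 0 then tan 2ψ₀ = c₁/c₂. -/
open Real

/-- Exact recovery of G₁, G₂, H₁, H₂ and ψ₀ in the six-parameter model. -/
theorem six_param_recovery
    (ι ψ0 G1 G2 H1 H2 : ℝ)
    (A1p A1x A2p A2x : ℝ)
    (hA1p : A1p = Real.sin ι * Real.cos ι / 2) (hA1x : A1x = Real.sin ι / 2)
    (hA2p : A2p = (1 + Real.cos ι ^ 2) / 2) (hA2x : A2x = Real.cos ι)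
    (C1 C2 C3 C4 D1 D2 D3 D4 : ℝ)
    (hC1 : C1 = A1p * Real.cos (2 * ψ0)) (hC2 : C2 = A1x * Real.sin (2 * ψ0))
    (hC3 : C3 = A1p * Real.sin (2 * ψ0)) (hC4 : C4 = A1x * Real.cos (2 * ψ0))
    (hD1 : D1 = A2p * Real.cos (2 * ψ0)) (hD2 : D2 = A2x * Real.sin (2 * ψ0))
    (hD3 : D3 = A2p * Real.sin (2 * ψ0)) (hD4 : D4 = A2x * Real.cos (2 * ψ0))
    (A11 A12 A13 A14 A21 A22 A23 A24 : ℝ)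
    (hA11 : A11 = C1 * G1 - C2 * G2) (hA12 : A12 = C3 * G1 + C4 * G2)
    (hA13 : A13 = -C1 * G2 - C2 * G1) (hA14 : A14 = -C3 * G2 + C4 * G1)
    (hA21 : A21 = D1 * H1 - D2 * H2) (hA22 : A22 = D3 * H1 + D4 * H2)
    (hA23 : A23 = -D1 * H2 - D2 * H1) (hA24 : A24 = -D3 * H2 + D4 * H1)
    (b1 b2 b3 c1 c2 c3 : ℝ)
    (hb1 : b1 = -A1x * A11 + A1p * A14)
    (hb2 : b2 = A1x * A12 + A1p * A13)
    (hb3 : b3 = A1x * A14 - A1p * A11)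
    (hc1 : c1 = -A2x * A21 + A2p * A24)
    (hc2 : c2 = A2x * A22 + A2p * A23)
    (hc3 : c3 = A2x * A24 - A2p * A21) :
    b2 = (Real.sin ι ^ 4 / 4) * Real.cos (2 * ψ0) * G2 ∧
    b3 = (Real.sin ι ^ 4 / 4) * Real.cos (2 * ψ0) * G1 ∧
    c1 = -(Real.sin ι ^ 4 / 4) * Real.sin (2 * ψ0) * H2 ∧
    c2 = -(Real.sin ι ^ 4 / 4) * Real.cos (2 * ψ0) * H2 ∧
    c3 = -(Real.sin ι ^ 4 / 4) * Real.cos (2 * ψ0) * H1 ∧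
    (Real.sin ι ≠ 0 → Real.cos (2 * ψ0) ≠ 0 →
      G1 = 4 * b3 / (Real.sin ι ^ 4 * Real.cos (2 * ψ0)) ∧
      G2 = 4 * b2 / (Real.sin ι ^ 4 * Real.cos (2 * ψ0)) ∧
      H1 = -4 * c3 / (Real.sin ι ^ 4 * Real.cos (2 * ψ0)) ∧
      H2 = -4 * c2 / (Real.sin ι ^ 4 * Real.cos (2 * ψ0)) ∧
      (H2 ≠ 0 → Real.tan (2 * ψ0) = c1 / c2)) := by
  have hpy := Real.sin_sq_add_cos_sq ι
  subst hA1p hA1x hA2p hA2x hC1 hC2 hC3 hC4 hD1 hD2 hD3 hD4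
  subst hA11 hA12 hA13 hA14 hA21 hA22 hA23 hA24 hb1 hb2 hb3 hc1 hc2 hc3
  set s := Real.sin ι
  set c := Real.cos ι
  set S := Real.sin (2 * ψ0)
  set C := Real.cos (2 * ψ0)
  have e2 : s / 2 * (s * c / 2 * S * G1 + s / 2 * C * G2) +
      s * c / 2 * (-(s * c / 2 * C) * G2 - s / 2 * S * G1) = s ^ 4 / 4 * C * G2 := by
    linear_combination (-(s ^ 2 / 4) * C * G2) * hpy
  have e3 : s / 2 * (-(s * c / 2 * S) * G2 + s / 2 * C * G1) -
      s * c / 2 * (s * c / 2 * C * G1 - s / 2 * S * G2) = s ^ 4 / 4 * C * G1 := by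
    linear_combination (-(s ^ 2 / 4) * C * G1) * hpy
  have f1 : -c * ((1 + c ^ 2) / 2 * C * H1 - c * S * H2) +
      (1 + c ^ 2) / 2 * (-((1 + c ^ 2) / 2 * S) * H2 + c * C * H1) =
      -(s ^ 4 / 4) * S * H2 := by
    linear_combination ((S * H2 / 4) * (s ^ 2 - c ^ 2 + 1)) * hpy
  have f2 : c * ((1 + c ^ 2) / 2 * S * H1 + c * C * H2) +
      (1 + c ^ 2) / 2 * (-((1 + c ^ 2) / 2 * C) * H2 - c * S * H1) =
      -(s ^ 4 / 4) * C * H2 := by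
    linear_combination ((C * H2 / 4) * (s ^ 2 - c ^ 2 + 1)) * hpy
  have f3 : c * (-((1 + c ^ 2) / 2 * S) * H2 + c * C * H1) -
      (1 + c ^ 2) / 2 * ((1 + c ^ 2) / 2 * C * H1 - c * S * H2) =
      -(s ^ 4 / 4) * C * H1 := by
    linear_combination ((C * H1 / 4) * (s ^ 2 - c ^ 2 + 1)) * hpy
  refine ⟨e2, e3, f1, f2, f3, fun hs hC => ?_⟩
  have hs4 : s ^ 4 ≠ 0 := pow_ne_zero _ hs
  refine ⟨?_, ?_, ?_, ?_, fun hH2 => ?_⟩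
  · rw [e3]; field_simp
  · rw [e2]; field_simp
  · rw [f3]; field_simp
  · rw [f2]; field_simp
  · rw [f1, f2, Real.tan_eq_sin_div_cos]
    have hd : -(s ^ 4 / 4) * C * H2 ≠ 0 := by
      apply mul_ne_zero (mul_ne_zero _ hC) hH2
      simpa using hs4
    rw [div_eq_div_iff hC hd]
    ring
end
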